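/- Uniqueness of the stable merge string: if A and B are sorted lists over a linear order and ties are broken in favor of A (elements of A precede equal elements of B), then the interleaving string of 1s and 2s producing the sorted merge is unique. -/

import Mathlib

/-- Interleave two lists according to a string of 1s and 2s, tagging each element
with the index (1 or 2) of the list it came from. -/
def taggedInterleave {α : Type*} : List α → List α → List ℕ → List (α × ℕ)
  | _, _, [] => []
  | A, B, c :: s =>
    if c = 1 then
      match A with
      | a :: A' => (a, 1) :: taggedInterleave A' B s
      | [] => taggedInterleave [] B s
    else
      match B with
      | b :: B' => (b, 2) :: taggedInterleave A B' s
      | [] => taggedInterleave A [] s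

lemma ti_cons1 {α : Type*} (a : α) (A B : List α) (s : List ℕ) :
    taggedInterleave (a :: A) B (1 :: s) = (a, 1) :: taggedInterleave A B s := rfl

lemma ti_cons2 {α : Type*} (b : α) (A B : List α) (s : List ℕ) :
    taggedInterleave A (b :: B) (2 :: s) = (b, 2) :: taggedInterleave A B s := rfl

lemma mem_ti {α : Type*} (s : List ℕ) : ∀ (A B : List α),
    s.count 1 = A.length → s.count 2 = B.length → (∀ c ∈ s, c = 1 ∨ c = 2) →
    (∀ a ∈ A, (a, 1) ∈ taggedInterleave A B s) ∧
    (∀ b ∈ B, (b, 2) ∈ taggedInterleave A B s) := by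
  induction s with
  | nil =>
    intro A B h1 h2 _
    simp at h1 h2
    simp [List.length_eq_zero_iff.mp h1.symm, List.length_eq_zero_iff.mp h2.symm]
  | cons c s' ih =>
    intro A B h1 h2 hc
    rcases hc c (by simp) with rfl | rfl
    · simp [List.count_cons] at h1 h2
      obtain ⟨a, A', rfl⟩ : ∃ a A', A = a :: A' := by
        cases A with
        | nil => simp at h1
        | cons a A' => exact ⟨a, A', rfl⟩
      simp at h1
      obtain ⟨hm1, hm2⟩ := ih A' B (by omega) h2 (fun c hc' => hc c (by simp [hc']))
      rw [ti_cons1]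
      constructor
      · rintro x hx
        rcases List.mem_cons.mp hx with rfl | hx
        · simp
        · exact List.mem_cons_of_mem _ (hm1 x hx)
      · intro b hb; exact List.mem_cons_of_mem _ (hm2 b hb)
    · simp [List.count_cons] at h1 h2
      obtain ⟨b, B', rfl⟩ : ∃ b B', B = b :: B' := by
        cases B with
        | nil => simp at h2
        | cons b B' => exact ⟨b, B', rfl⟩
      simp at h2
      obtain ⟨hm1, hm2⟩ := ih A B' h1 (by omega) (fun c hc' => hc c (by simp [hc']))
      rw [ti_cons2]
      refine ⟨fun a ha => List.mem_cons_of_mem _ (hm1 a ha), ?_⟩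
      rintro x hx
      rcases List.mem_cons.mp hx with rfl | hx
      · simp
      · exact List.mem_cons_of_mem _ (hm2 x hx)

/-- An interleaving string is valid if it consists of `|A|` ones and `|B|` twos and
the tagged interleaving is sorted by value, breaking ties in favor of list `A`
(label 1 before label 2), i.e. the merge is sorted and stable. -/
def ValidMergeString {α : Type*} [LinearOrder α] (A B : List α) (s : List ℕ) : Prop :=
  s.length = A.length + B.length ∧
  s.count 1 = A.length ∧
  s.count 2 = B.length ∧
  (∀ c ∈ s, c = 1 ∨ c = 2) ∧
  (taggedInterleave A B s).Pairwise
    (fun p q => p.1 < q.1 ∨ (p.1 = q.1 ∧ p.2 ≤ q.2))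

def headChar {α : Type*} [LinearOrder α] : List α → List α → ℕ
  | [], _ => 2
  | _ :: _, [] => 1
  | a :: _, b :: _ => if a ≤ b then 1 else 2

lemma head_det {α : Type*} [LinearOrder α] (A B : List α) (c : ℕ) (s' : List ℕ)
    (h : ValidMergeString A B (c :: s')) : c = headChar A B := by
  obtain ⟨hlen, h1, h2, hc, hsort⟩ := h
  cases A with
  | nil =>
    show c = 2
    rcases hc c (by simp) with rfl | rfl
    · simp [List.count_cons] at h1
    · rfl
  | cons a A' =>
    cases B with
    | nil =>
      show c = 1
      rcases hc c (by simp) with rfl | rfl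
      · rfl
      · simp [List.count_cons] at h2
    | cons b B' =>
      show c = if a ≤ b then 1 else 2
      rcases hc c (by simp) with rfl | rfl
      · suffices hab : a ≤ b by simp [hab]
        by_contra hab
        push_neg at hab
        rw [ti_cons1, List.pairwise_cons] at hsort
        simp [List.count_cons] at h1 h2
        have hm := (mem_ti s' A' (b :: B') (by omega) h2
          (fun c hc' => hc c (by simp [hc']))).2 b (by simp)
        have := hsort.1 _ hm
        simp at this
        rcases this with h' | h'
        · exact lt_asymm hab h'
        · exact absurd hab (by simp [h'])
      · suffices hab : ¬ a ≤ b by simp [hab]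
        intro hab
        rw [ti_cons2, List.pairwise_cons] at hsort
        simp [List.count_cons] at h1 h2
        have hm := (mem_ti s' (a :: A') B' h1 (by omega)
          (fun c hc' => hc c (by simp [hc']))).1 a (by simp)
        have := hsort.1 _ hm
        simp at this
        exact absurd this (not_lt.mpr hab)

/-- Uniqueness of the stable merge string: for sorted lists `A` and `B`, with ties
broken in favor of `A`, the interleaving string of 1s and 2s producing the sorted
stable merge is unique. -/
theorem stable_merge_string_unique {α : Type*} [LinearOrder α] (A B : List α)
    (hA : A.Pairwise (· ≤ ·)) (hB : B.Pairwise (· ≤ ·))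
    (s t : List ℕ) (hs : ValidMergeString A B s) (ht : ValidMergeString A B t) :
    s = t := by
  induction s generalizing A B t with
  | nil =>
    have h0 := hs.1
    have h1 := ht.1
    simp at h0
    cases t with
    | nil => rfl
    | cons d t' => exfalso; simp at h1; omega
  | cons c s' ih =>
    cases t with
    | nil =>
      have h0 := ht.1
      have h1 := hs.1
      simp at h0
      exfalso; simp at h1; omega
    | cons d t' =>
      have hcd : c = d := (head_det A B c s' hs).trans (head_det A B d t' ht).symm
      subst hcd
      obtain ⟨hlen, h1, h2, hc, hsort⟩ := hs
      obtain ⟨hlen', h1', h2', hc', hsort'⟩ := ht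
      rcases hc c (by simp) with rfl | rfl
      · obtain ⟨a, A', rfl⟩ : ∃ a A', A = a :: A' := by
          cases A with
          | nil => simp [List.count_cons] at h1
          | cons a A' => exact ⟨a, A', rfl⟩
        simp [List.count_cons] at h1 h2 h1' h2' hlen hlen'
        rw [ti_cons1, List.pairwise_cons] at hsort hsort'
        have := ih A' B (List.pairwise_cons.mp hA).2 hB t'
          ⟨by omega, by omega, h2, fun c hc1 => hc c (by simp [hc1]), hsort.2⟩
          ⟨by omega, by omega, h2', fun c hc1 => hc' c (by simp [hc1]), hsort'.2⟩
        rw [this]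
      · obtain ⟨b, B', rfl⟩ : ∃ b B', B = b :: B' := by
          cases B with
          | nil => simp [List.count_cons] at h2
          | cons b B' => exact ⟨b, B', rfl⟩
        simp [List.count_cons] at h1 h2 h1' h2' hlen hlen'
        rw [ti_cons2, List.pairwise_cons] at hsort hsort'
        have := ih A B' hA (List.pairwise_cons.mp hB).2 t'
          ⟨by omega, h1, by omega, fun c hc1 => hc c (by simp [hc1]), hsort.2⟩
          ⟨by omega, h1', by omega, fun c hc1 => hc' c (by simp [hc1]), hsort'.2⟩
        rw [this]
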